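/- arXiv:0710.4583 — 4 statements merged into one kernel-verified Lean document; each statement's English description precedes it below -/
import Mathlib

section
/- If x : ℝ → ℝ³ is a differentiable solution of the Rabinovich system, then the function h₃(x(t)) = x₁(t)² − x₃(t)² is constant in t. -/
theorem HasDerivAt.sq_sub_sq_eq_zero {u v : ℝ → ℝ} {w t : ℝ}
    (hu : HasDerivAt u (w * v t) t) (hv : HasDerivAt v (w * u t) t) :
    HasDerivAt (fun s => u s ^ 2 - v s ^ 2) 0 t := by
  refine ((hu.pow 2).sub (hv.pow 2)).congr_deriv ?_
  ring

theorem rabinovich_h3_conserved_general (x₁ x₂ x₃ : ℝ → ℝ)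
    (hx₁ : ∀ t, HasDerivAt x₁ (x₂ t * x₃ t) t)
    (hx₃ : ∀ t, HasDerivAt x₃ (x₁ t * x₂ t) t) :
    ∀ t s : ℝ, x₁ t ^ 2 - x₃ t ^ 2 = x₁ s ^ 2 - x₃ s ^ 2 := by
  have hderiv : ∀ t, HasDerivAt (fun s => x₁ s ^ 2 - x₃ s ^ 2) 0 t := fun t =>
    (hx₁ t).sq_sub_sq_eq_zero (by simpa only [mul_comm] using hx₃ t)
  exact is_const_of_deriv_eq_zero (fun t => (hderiv t).differentiableAt)
    (fun t => (hderiv t).deriv)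

/-- If (x₁,x₂,x₃) is a differentiable solution of the Rabinovich system
ẋ₁ = x₂x₃, ẋ₂ = −x₁x₃, ẋ₃ = x₁x₂, then h₃(x(t)) = x₁(t)² − x₃(t)² is
constant in t. -/
theorem rabinovich_h3_conserved (x₁ x₂ x₃ : ℝ → ℝ)
    (hx₁ : ∀ t, HasDerivAt x₁ (x₂ t * x₃ t) t)
    (hx₂ : ∀ t, HasDerivAt x₂ (-(x₁ t * x₃ t)) t)
    (hx₃ : ∀ t, HasDerivAt x₃ (x₁ t * x₂ t) t) :
    ∀ t s : ℝ, x₁ t ^ 2 - x₃ t ^ 2 = x₁ s ^ 2 - x₃ s ^ 2 :=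
  rabinovich_h3_conserved_general x₁ x₂ x₃ hx₁ hx₃
end

section
/- The Rabinovich system admits the Hamilton–Poisson realizations (ℝ³, P¹, h₁), (ℝ³, P², h₂) and (ℝ³, P³, h₃): for every x ∈ ℝ³ one has P¹(x)·∇h₁(x) = P²(x)·∇h₂(x) = P³(x)·∇h₃(x) = X(x), where X is the Rabinovich vector field. -/
open Matrix

/-- The Rabinovich vector field X(x₁,x₂,x₃) = (x₂x₃, −x₁x₃, x₁x₂). -/
def rabinovichField (x : Fin 3 → ℝ) : Fin 3 → ℝ :=
  ![x 1 * x 2, -(x 0 * x 2), x 0 * x 1]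

/-- The gradient of a function on ℝ³. -/
noncomputable def grad (f : (Fin 3 → ℝ) → ℝ) (x : Fin 3 → ℝ) : Fin 3 → ℝ :=
  fun j => fderiv ℝ f x (Pi.single j 1)

/-- The Poisson matrix P¹. -/
def P1 (x : Fin 3 → ℝ) : Matrix (Fin 3) (Fin 3) ℝ :=
  !![0, x 2, -(x 1); -(x 2), 0, 0; x 1, 0, 0]

/-- The Poisson matrix P². -/
noncomputable def P2 (x : Fin 3 → ℝ) : Matrix (Fin 3) (Fin 3) ℝ :=
  !![0, 0, x 1 / 2; 0, 0, -(x 0) / 2; -(x 1) / 2, x 0 / 2, 0]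

/-- The Poisson matrix P³. -/
noncomputable def P3 (x : Fin 3 → ℝ) : Matrix (Fin 3) (Fin 3) ℝ :=
  !![0, 0, -(x 1) / 2; 0, 0, x 0 / 2; x 1 / 2, -(x 0) / 2, 0]

/-- h₁(x) = (x₁² + x₂²)/2. -/
noncomputable def h1 (x : Fin 3 → ℝ) : ℝ := (x 0 ^ 2 + x 1 ^ 2) / 2

/-- h₂(x) = x₂² + x₃². -/
def h2 (x : Fin 3 → ℝ) : ℝ := x 1 ^ 2 + x 2 ^ 2

/-- h₃(x) = x₁² − x₃². -/
def h3 (x : Fin 3 → ℝ) : ℝ := x 0 ^ 2 - x 2 ^ 2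

/-! Each hᵢ is a diagonal quadratic form `∑ cⱼ xⱼ²`, whose gradient is `(2 cⱼ xⱼ)ⱼ`; with these
gradients the three identities `Pⁱ ∇hᵢ = X` are polynomial identities, checked componentwise. -/

lemma hasFDerivAt_sum_mul_sq {ι : Type*} [Fintype ι] (c x : ι → ℝ) :
    HasFDerivAt (fun y : ι → ℝ => ∑ i, c i * y i ^ 2)
      (∑ i, (2 * c i * x i) • ContinuousLinearMap.proj (R := ℝ) (φ := fun _ : ι => ℝ) i) x := by
  refine (HasFDerivAt.fun_sum fun i _ =>
    ((hasFDerivAt_apply (𝕜 := ℝ) i x).pow 2).const_mul (c i)).congr_fderiv ?_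
  refine Finset.sum_congr rfl fun i _ => ?_
  ext y
  simp only [_root_.smul_apply, ContinuousLinearMap.proj_apply, smul_eq_mul]
  ring

lemma grad_sum_mul_sq (c x : Fin 3 → ℝ) :
    grad (fun y => ∑ i, c i * y i ^ 2) x = fun j => 2 * c j * x j := by
  funext j
  simp [grad, (hasFDerivAt_sum_mul_sq c x).fderiv, Pi.single_apply]

lemma h1_eq_sum : h1 = fun y => ∑ i, ![1 / 2, 1 / 2, 0] i * y i ^ 2 := by
  funext y
  simp only [h1, Fin.sum_univ_three, cons_val_zero, cons_val_one, cons_val]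
  ring

lemma h2_eq_sum : h2 = fun y => ∑ i, ![0, 1, 1] i * y i ^ 2 := by
  funext y
  simp [h2, Fin.sum_univ_three]

lemma h3_eq_sum : h3 = fun y => ∑ i, ![1, 0, -1] i * y i ^ 2 := by
  funext y
  simp only [h3, Fin.sum_univ_three, cons_val_zero, cons_val_one, cons_val]
  ring

/-- The Rabinovich system admits the Hamilton–Poisson realizations
(ℝ³, P¹, h₁), (ℝ³, P², h₂) and (ℝ³, P³, h₃). -/
theorem rabinovich_hamilton_poisson_realizations (x : Fin 3 → ℝ) :
    (P1 x).mulVec (grad h1 x) = rabinovichField x ∧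
    (P2 x).mulVec (grad h2 x) = rabinovichField x ∧
    (P3 x).mulVec (grad h3 x) = rabinovichField x := by
  rw [h1_eq_sum, h2_eq_sum, h3_eq_sum]
  simp only [grad_sum_mul_sq]
  refine ⟨?_, ?_, ?_⟩ <;> ext i <;> fin_cases i <;>
    simp [P1, P2, P3, rabinovichField, mulVec, dotProduct, Fin.sum_univ_three] <;> ring
end

section
/- For every m ∈ ℝ with m ≠ 0, the Jacobian matrix of the Rabinovich vector field at the equilibrium e2^m = (0,m,0) has a real eigenvalue equal to |m| > 0; consequently the equilibrium (0,m,0) is unstable. -/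
open Matrix

/-- The Jacobian matrix of a vector field on ℝ³ at a point. -/
noncomputable def jacobian (F : (Fin 3 → ℝ) → (Fin 3 → ℝ)) (p : Fin 3 → ℝ) :
    Matrix (Fin 3) (Fin 3) ℝ :=
  Matrix.of fun i j => fderiv ℝ (fun x => F x i) p (Pi.single j 1)

/-- x : ℝ → ℝ³ is a solution of the differential system associated to a
vector field F. -/
def IsSolution (F : (Fin 3 → ℝ) → (Fin 3 → ℝ)) (x : ℝ → Fin 3 → ℝ) : Prop :=
  ∀ t : ℝ, ∀ i : Fin 3, HasDerivAt (fun s => x s i) (F (x t) i) t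

/-- An equilibrium e of the system given by F is (Lyapunov) unstable: there is
ε > 0 such that for every δ > 0 some solution starting within δ of e leaves
the ε-ball around e at some positive time. -/
def Unstable (F : (Fin 3 → ℝ) → (Fin 3 → ℝ)) (e : Fin 3 → ℝ) : Prop :=
  ∃ ε > (0 : ℝ), ∀ δ > (0 : ℝ), ∃ x : ℝ → Fin 3 → ℝ,
    IsSolution F x ∧ ‖x 0 - e‖ < δ ∧ ∃ t > (0 : ℝ), ε ≤ ‖x t - e‖
/-!
The Jacobian at `(0, m, 0)` sends `(m, 0, |m|)` to `|m| • (m, 0, |m|)`. Instability is witnessed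
by an explicit heteroclinic orbit, `θ ↦ (m sech θ, -m tanh θ, |m| sech θ)` with `θ = |m| t`: it
tends to `(0, m, 0)` as `t → -∞` but passes through `(m, 0, |m|)` at `t = 0`. Since the system is
autonomous, its time translates start arbitrarily close to the equilibrium and still reach a point
at distance `|m|` from it.
-/

open Filter Topology

theorem fderiv_apply_mul_apply {ι : Type*} [Fintype ι] (a b : ι) (p w : ι → ℝ) :
    fderiv ℝ (fun x : ι → ℝ => x a * x b) p w = p a * w b + p b * w a := by
  rw [fderiv_fun_mul (differentiableAt_apply a p) (differentiableAt_apply b p),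
    (hasFDerivAt_apply a p).fderiv, (hasFDerivAt_apply b p).fderiv]
  simp

theorem jacobian_rabinovichField (p : Fin 3 → ℝ) :
    jacobian rabinovichField p = !![0, p 2, p 1; -p 2, 0, -p 0; p 1, p 0, 0] := by
  ext i j
  fin_cases i <;> fin_cases j <;> simp [jacobian, rabinovichField, fderiv_apply_mul_apply]

theorem jacobian_rabinovichField_mulVec_eigenvector (m : ℝ) :
    jacobian rabinovichField ![0, m, 0] *ᵥ ![m, 0, |m|] = |m| • ![m, 0, |m|] := by
  rw [jacobian_rabinovichField]
  ext i
  fin_cases i <;> simp [mulVec, dotProduct, Fin.sum_univ_three, abs_mul_abs_self, mul_comm]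

theorem IsSolution.comp_add_const {F : (Fin 3 → ℝ) → (Fin 3 → ℝ)} {x : ℝ → Fin 3 → ℝ}
    (hx : IsSolution F x) (s : ℝ) : IsSolution F (fun t => x (t + s)) :=
  fun t i => (hx (t + s) i).comp_add_const t s

theorem unstable_of_isSolution_tendsto_atBot {F : (Fin 3 → ℝ) → (Fin 3 → ℝ)}
    {x : ℝ → Fin 3 → ℝ} {e : Fin 3 → ℝ} {t₁ : ℝ} (hx : IsSolution F x)
    (hlim : Tendsto x atBot (𝓝 e)) (hne : x t₁ ≠ e) : Unstable F e := by
  refine ⟨‖x t₁ - e‖, norm_pos_iff.2 (sub_ne_zero.2 hne), fun δ hδ => ?_⟩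
  obtain ⟨s, hs, hst⟩ := ((Metric.tendsto_nhds.1 hlim δ hδ).and (eventually_lt_atBot t₁)).exists
  refine ⟨fun t => x (t + s), hx.comp_add_const s, ?_, t₁ - s, sub_pos.2 hst, ?_⟩
  · simpa [dist_eq_norm] using hs
  · simp

/-- At `u = exp θ` this is `(m sech θ, -m tanh θ, k sech θ)`. -/
noncomputable def rabinovichOrbit (m k u : ℝ) : Fin 3 → ℝ :=
  ![2 * m * u / (1 + u ^ 2), m * (1 - u ^ 2) / (1 + u ^ 2), 2 * k * u / (1 + u ^ 2)]

theorem continuous_rabinovichOrbit (m k : ℝ) : Continuous (rabinovichOrbit m k) := by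
  refine continuous_pi fun i => ?_
  fin_cases i <;> simp only [rabinovichOrbit] <;> fun_prop (disch := intro x; positivity)

theorem tendsto_rabinovichOrbit_exp_atBot (m : ℝ) {k : ℝ} (hk : 0 < k) :
    Tendsto (fun t => rabinovichOrbit m k (Real.exp (k * t))) atBot (𝓝 ![0, m, 0]) := by
  have h0 : rabinovichOrbit m k 0 = ![0, m, 0] := by simp [rabinovichOrbit]
  rw [← h0]
  exact (continuous_rabinovichOrbit m k).continuousAt.tendsto.comp
    (Real.tendsto_exp_atBot.comp (tendsto_id.const_mul_atBot hk))

theorem isSolution_rabinovichOrbit_exp {m k : ℝ} (hk : k ^ 2 = m ^ 2) :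
    IsSolution rabinovichField (fun t => rabinovichOrbit m k (Real.exp (k * t))) := by
  intro t i
  set u := Real.exp (k * t) with hu_def
  have hu : HasDerivAt (fun s => Real.exp (k * s)) (u * k) t := by
    simpa using ((hasDerivAt_id t).const_mul k).exp
  have hD : HasDerivAt (fun s => 1 + Real.exp (k * s) ^ 2) (2 * u * (u * k)) t := by
    simpa using (hu.pow 2).const_add 1
  have hD0 : 1 + u ^ 2 ≠ 0 := by positivity
  fin_cases i
  · refine ((hu.const_mul (2 * m)).div hD hD0).congr_deriv ?_
    simp [rabinovichField, rabinovichOrbit]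
    field_simp
    ring
  · refine (((hu.pow 2).const_sub 1 |>.const_mul m).div hD hD0).congr_deriv ?_
    simp [rabinovichField, rabinovichOrbit]
    field_simp
    ring
  · refine ((hu.const_mul (2 * k)).div hD hD0).congr_deriv ?_
    simp [rabinovichField, rabinovichOrbit, ← hu_def]
    field_simp
    linear_combination u * (1 - u ^ 2) * hk

/-- For m ≠ 0, the Jacobian of the Rabinovich vector field at the equilibrium
(0,m,0) has a real eigenvalue |m| > 0; consequently (0,m,0) is unstable. -/
theorem rabinovich_e2_unstable (m : ℝ) (hm : m ≠ 0) :
    (0 < |m| ∧ ∃ v : Fin 3 → ℝ, v ≠ 0 ∧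
      (jacobian rabinovichField ![0, m, 0]).mulVec v = |m| • v) ∧
    Unstable rabinovichField ![0, m, 0] := by
  have hm_pos : 0 < |m| := abs_pos.2 hm
  have h_eigenvector_ne : ![m, 0, |m|] ≠ 0 := fun h => hm (by simpa using congrFun h 0)
  have h_orbit_ne : rabinovichOrbit m |m| (Real.exp (|m| * 0)) ≠ ![0, m, 0] := fun h =>
    hm (by simpa [rabinovichOrbit] using congrFun h 0)
  exact ⟨⟨hm_pos, _, h_eigenvector_ne, jacobian_rabinovichField_mulVec_eigenvector m⟩,
    unstable_of_isSolution_tendsto_atBot (isSolution_rabinovichOrbit_exp (sq_abs m))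
      (tendsto_rabinovichOrbit_exp_atBot m hm_pos) h_orbit_ne⟩
end

section
/- The planes x₃ = x₁ and x₃ = −x₁ are invariant for the Rabinovich system: if x : ℝ → ℝ³ is a differentiable solution with x₃(0) = x₁(0), then x₃(t) = x₁(t) for all t; and if x₃(0) = −x₁(0), then x₃(t) = −x₁(t) for all t. -/
/-!
Along a solution, `u = x₃ - x₁` satisfies `u' = x₁x₂ - x₂x₃ = -x₂ u` and `v = x₃ + x₁` satisfies
`v' = x₂ v`. Both are scalar linear equations with continuous coefficient, whose solutions are
multiples of `exp ∫ (±x₂)`, hence vanish everywhere once they vanish at `0`.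
-/

open Real

theorem eq_zero_of_hasDerivAt_mul_self {y c : ℝ → ℝ} {t₀ : ℝ} (hc : Continuous c)
    (hy : ∀ t, HasDerivAt y (c t * y t) t) (h₀ : y t₀ = 0) (t : ℝ) : y t = 0 := by
  set g : ℝ → ℝ := fun t ↦ y t * exp (-∫ s in t₀..t, c s)
  have hg : ∀ t, HasDerivAt g 0 t := fun t ↦ by
    have hF := (hc.integral_hasStrictDerivAt t₀ t).hasDerivAt
    refine ((hy t).fun_mul hF.fun_neg.exp).congr_deriv ?_
    ring
  have hg_const : g t = g t₀ :=
    is_const_of_deriv_eq_zero (fun s ↦ (hg s).differentiableAt) (fun s ↦ (hg s).deriv) t t₀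
  simpa [g, h₀, exp_ne_zero] using hg_const

/-- The planes x₃ = x₁ and x₃ = −x₁ are invariant for the Rabinovich system
ẋ₁ = x₂x₃, ẋ₂ = −x₁x₃, ẋ₃ = x₁x₂. -/
theorem rabinovich_invariant_planes (x₁ x₂ x₃ : ℝ → ℝ)
    (hx₁ : ∀ t, HasDerivAt x₁ (x₂ t * x₃ t) t)
    (hx₂ : ∀ t, HasDerivAt x₂ (-(x₁ t * x₃ t)) t)
    (hx₃ : ∀ t, HasDerivAt x₃ (x₁ t * x₂ t) t) :
    (x₃ 0 = x₁ 0 → ∀ t : ℝ, x₃ t = x₁ t) ∧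
    (x₃ 0 = -x₁ 0 → ∀ t : ℝ, x₃ t = -x₁ t) := by
  have hx₂_cont : Continuous x₂ := continuous_iff_continuousAt.2 fun t ↦ (hx₂ t).continuousAt
  have h_sub : ∀ t, HasDerivAt (fun t ↦ x₃ t - x₁ t) (-x₂ t * (x₃ t - x₁ t)) t := fun t ↦
    ((hx₃ t).fun_sub (hx₁ t)).congr_deriv (by ring)
  have h_add : ∀ t, HasDerivAt (fun t ↦ x₃ t + x₁ t) (x₂ t * (x₃ t + x₁ t)) t := fun t ↦
    ((hx₃ t).fun_add (hx₁ t)).congr_deriv (by ring)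
  constructor
  · intro h₀ t
    exact sub_eq_zero.1 <|
      eq_zero_of_hasDerivAt_mul_self hx₂_cont.neg h_sub (sub_eq_zero.2 h₀) t
  · intro h₀ t
    exact eq_neg_iff_add_eq_zero.2 <|
      eq_zero_of_hasDerivAt_mul_self hx₂_cont h_add (eq_neg_iff_add_eq_zero.1 h₀) t
end
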